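/- The submeasure φ₂ is summable-like: there exists ε > 0 such that for every δ > 0 there are pairwise disjoint finite sets A_n ⊆ ℕ (n ∈ ℕ) with φ₂(A_n) < δ and there is k ∈ ℕ such that φ₂(⋃_{n∈Y} A_n) ≥ ε for every Y ⊆ ℕ with |Y| = k. -/

import Mathlib

open Filter Topology ENNReal

/-- `λ_k = 2^{-n}` for `k ∈ [2^n, 2^{n+1})` (for `k ≥ 1`). -/
noncomputable def lam : ℕ → ℝ := fun k => (1 / 2 : ℝ) ^ (Nat.log 2 k)

/-- The Schreier family `S₁ = {∅} ∪ {F ⊆ ℕ∖{0} finite nonempty : |F| ≤ min F}`;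
note that `|F| ≤ min F` is equivalent to `∀ k ∈ F, |F| ≤ k`. -/
def S1 : Set (Finset ℕ) := {F | 0 ∉ F ∧ ∀ k ∈ F, F.card ≤ k}

/-- `φ₁(A) = sup_{F ∈ S₁} Σ_{k ∈ F ∩ A} λ_k`. -/
noncomputable def phi1 (A : Set ℕ) : ℝ≥0∞ :=
  ⨆ F ∈ S1, ∑ k ∈ F, A.indicator (fun k => ENNReal.ofReal (lam k)) k

/-- The second Schreier family: unions `E₁ ∪ ⋯ ∪ E_m` of nonempty members of `S₁`
with `m ≤ min E₁` and `max E_j < min E_{j+1}`. -/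
def S2 : Set (Finset ℕ) :=
  {F | F = ∅ ∨ ∃ (m : ℕ) (E : Fin (m + 1) → Finset ℕ),
    (∀ j, E j ∈ S1 ∧ (E j).Nonempty) ∧
    (∀ j k : Fin (m + 1), j < k → ∀ a ∈ E j, ∀ b ∈ E k, a < b) ∧
    (∀ a ∈ E 0, m + 1 ≤ a) ∧
    F = Finset.univ.biUnion E}

/-- `φ₂(A) = sup_{F ∈ S₂} Σ_{k ∈ F ∩ A} λ_k`. -/
noncomputable def phi2 (A : Set ℕ) : ℝ≥0∞ :=
  ⨆ F ∈ S2, ∑ k ∈ F, A.indicator (fun k => ENNReal.ofReal (lam k)) k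

def Bq (q i : ℕ) : Finset ℕ := Finset.Ico (2^(q+i)) (2^(q+i)+2^i)

lemma Bq_upper_le {q i j : ℕ} (h : i < j) : 2^(q+i)+2^i ≤ 2^(q+j) := by
  have h1 : (2:ℕ)^i ≤ 2^(q+i) := Nat.pow_le_pow_right (by norm_num) (Nat.le_add_left _ _)
  have h2 : (2:ℕ)^(q+i+1) ≤ 2^(q+j) := Nat.pow_le_pow_right (by norm_num) (by omega)
  have h3 : (2:ℕ)^(q+i+1) = 2^(q+i) + 2^(q+i) := by ring
  omega

lemma Bq_disjoint {q i j : ℕ} (h : i ≠ j) : Disjoint (Bq q i) (Bq q j) := by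
  rw [Finset.disjoint_left]
  intro a ha ha'
  simp only [Bq, Finset.mem_Ico] at ha ha'
  rcases h.lt_or_gt with hlt | hlt
  · have := Bq_upper_le (q := q) hlt; omega
  · have := Bq_upper_le (q := q) hlt; omega

lemma Bq_mem_S1 (q i : ℕ) : Bq q i ∈ S1 := by
  constructor
  · simp only [Bq, Finset.mem_Ico]
    intro h
    have : 0 < 2^(q+i) := Nat.pow_pos (by norm_num)
    omega
  · intro k hk
    simp only [Bq, Finset.mem_Ico, Nat.card_Ico] at hk ⊢
    have h1 : (2:ℕ)^i ≤ 2^(q+i) := Nat.pow_le_pow_right (by norm_num) (Nat.le_add_left _ _)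
    omega

lemma Bq_nonempty (q i : ℕ) : (Bq q i).Nonempty :=
  Finset.nonempty_Ico.mpr (by have : 0 < 2^i := Nat.pow_pos (show 0 < 2 by norm_num); omega)

lemma lam_eq {n k : ℕ} (h1 : 2^n ≤ k) (h2 : k < 2^(n+1)) : lam k = (1/2:ℝ)^n := by
  unfold lam
  rw [Nat.log_eq_of_pow_le_of_lt_pow h1 h2]

lemma sum_Bq (q i : ℕ) :
    ∑ k ∈ Bq q i, ENNReal.ofReal (lam k) = ENNReal.ofReal ((1/2:ℝ)^q) := by
  have hcard : (Bq q i).card = 2^i := by simp [Bq, Nat.card_Ico]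
  have hconst : ∀ k ∈ Bq q i, ENNReal.ofReal (lam k) = ENNReal.ofReal ((1/2:ℝ)^(q+i)) := by
    intro k hk
    simp only [Bq, Finset.mem_Ico] at hk
    have h2 : k < 2^(q+i+1) := by
      have h1 : (2:ℕ)^i ≤ 2^(q+i) := Nat.pow_le_pow_right (by norm_num) (Nat.le_add_left _ _)
      have h3 : (2:ℕ)^(q+i+1) = 2^(q+i) + 2^(q+i) := by ring
      omega
    rw [lam_eq hk.1 h2]
  rw [Finset.sum_congr rfl hconst, Finset.sum_const, hcard, nsmul_eq_mul]
  rw [show ((2^i : ℕ) : ℝ≥0∞) = ENNReal.ofReal ((2:ℝ)^i) by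
    rw [ENNReal.ofReal_pow (by norm_num)]; norm_num]
  rw [← ENNReal.ofReal_mul (by positivity)]
  congr 1
  rw [pow_add]
  have : (2:ℝ)^i * (1/2:ℝ)^i = 1 := by rw [← mul_pow]; norm_num
  calc (2:ℝ)^i * ((1/2)^q * (1/2)^i) = (2^i * (1/2)^i) * (1/2)^q := by ring
  _ = (1/2)^q := by rw [this]; ring

lemma phi2_le_sum (A : Finset ℕ) :
    phi2 ↑A ≤ ∑ k ∈ A, ENNReal.ofReal (lam k) := by
  apply iSup₂_le
  intro F _
  calc ∑ k ∈ F, (↑A : Set ℕ).indicator (fun k => ENNReal.ofReal (lam k)) k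
      = ∑ k ∈ F ∩ A, ENNReal.ofReal (lam k) := by
        rw [Finset.sum_congr rfl (fun k _ => ?_), Finset.sum_ite_mem]
        simp [Set.indicator_apply]
  _ ≤ ∑ k ∈ A, ENNReal.ofReal (lam k) :=
        Finset.sum_le_sum_of_subset (Finset.inter_subset_right)

theorem stmt14 : ∃ ε : ℝ, 0 < ε ∧ ∀ δ : ℝ, 0 < δ →
    ∃ A : ℕ → Set ℕ, (∀ n, (A n).Finite) ∧ Pairwise (Function.onFun Disjoint A) ∧
      (∀ n, phi2 (A n) < ENNReal.ofReal δ) ∧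
      ∃ k : ℕ, ∀ Y : Finset ℕ, Y.card = k →
        ENNReal.ofReal ε ≤ phi2 (⋃ n ∈ Y, A n) := by
  refine ⟨1, one_pos, fun δ hδ => ?_⟩
  obtain ⟨q, hq⟩ := exists_pow_lt_of_lt_one hδ (show (1/2:ℝ) < 1 by norm_num)
  refine ⟨fun i => ↑(Bq q i), fun i => (Bq q i).finite_toSet, ?_, ?_, ?_⟩
  · intro i j hij
    exact Finset.disjoint_coe.mpr (Bq_disjoint hij)
  · intro i
    calc phi2 ↑(Bq q i) ≤ ∑ k ∈ Bq q i, ENNReal.ofReal (lam k) := phi2_le_sum _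
    _ = ENNReal.ofReal ((1/2:ℝ)^q) := sum_Bq q i
    _ < ENNReal.ofReal δ := (ENNReal.ofReal_lt_ofReal_iff hδ).mpr hq
  · refine ⟨2^q, fun Y hY => ?_⟩
    have hm : 2^q = (2^q - 1) + 1 := by
      have := Nat.one_le_two_pow (n := q); omega
    set m : ℕ := 2^q - 1 with hmdef
    have hY' : Y.card = m + 1 := by omega
    set e := Y.orderIsoOfFin hY' with he
    set E : Fin (m+1) → Finset ℕ := fun j => Bq q ((e j : ℕ)) with hE
    set F : Finset ℕ := Finset.univ.biUnion E with hF
    have hemem : ∀ j, ((e j : ℕ)) ∈ Y := fun j => (e j).2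
    have heinj : ∀ {j k : Fin (m+1)}, j ≠ k → ((e j : ℕ)) ≠ ((e k : ℕ)) := by
      intro j k hjk h
      exact hjk (e.injective (Subtype.ext h))
    have hFS2 : F ∈ S2 := by
      right
      refine ⟨m, E, fun j => ⟨Bq_mem_S1 _ _, Bq_nonempty _ _⟩, ?_, ?_, rfl⟩
      · intro j k hjk a ha b hb
        have hek : ((e j : ℕ)) < ((e k : ℕ)) := e.strictMono hjk
        simp only [hE, Bq, Finset.mem_Ico] at ha hb
        have := Bq_upper_le (q := q) hek
        omega
      · intro a ha
        simp only [hE, Bq, Finset.mem_Ico] at ha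
        have h1 : (2:ℕ)^q ≤ 2^(q + (e 0 : ℕ)) := Nat.pow_le_pow_right (by norm_num) (by omega)
        omega
    have hsub : ∀ k ∈ F, k ∈ ⋃ n ∈ Y, (↑(Bq q n) : Set ℕ) := by
      intro k hk
      simp only [hF, Finset.mem_biUnion, Finset.mem_univ, true_and] at hk
      obtain ⟨j, hj⟩ := hk
      exact Set.mem_biUnion (hemem j) hj
    have hsum : ∑ k ∈ F, (⋃ n ∈ Y, (↑(Bq q n) : Set ℕ)).indicator
        (fun k => ENNReal.ofReal (lam k)) k = ENNReal.ofReal 1 := by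
      rw [Finset.sum_congr rfl (fun k hk => Set.indicator_of_mem (hsub k hk) _)]
      rw [hF, Finset.sum_biUnion]
      · have : ∀ j ∈ (Finset.univ : Finset (Fin (m+1))),
            ∑ k ∈ E j, ENNReal.ofReal (lam k) = ENNReal.ofReal ((1/2:ℝ)^q) :=
          fun j _ => sum_Bq q _
        rw [Finset.sum_congr rfl this, Finset.sum_const]
        simp only [Finset.card_univ, Fintype.card_fin, nsmul_eq_mul]
        rw [show ((m+1 : ℕ) : ℝ≥0∞) = ENNReal.ofReal ((2:ℝ)^q) by
          rw [← hm]; rw [ENNReal.ofReal_pow (by norm_num)]; norm_num]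
        rw [← ENNReal.ofReal_mul (by positivity), ← mul_pow]
        norm_num
      · intro j _ k _ hjk
        exact Bq_disjoint (heinj hjk)
    calc ENNReal.ofReal 1 = ∑ k ∈ F, (⋃ n ∈ Y, (↑(Bq q n) : Set ℕ)).indicator
          (fun k => ENNReal.ofReal (lam k)) k := hsum.symm
    _ ≤ phi2 (⋃ n ∈ Y, ↑(Bq q n)) := le_iSup₂_of_le F hFS2 le_rfl
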